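/- Let (P_θ : θ ∈ Θ) with Θ ⊆ ℝ be a statistical model of probability measures on a common measurable space, and let θ̂ be a real-valued estimator (a measurable function of the data) with finite variance under every P_θ. Define Bias_θ(θ̂) := E_θ[θ̂] − θ and r(θ, θ′) := H(P_θ, P_{θ′}). Let B ≥ 0 and suppose sup_{θ ∈ Θ} |Bias_θ(θ̂)| ≤ B. Then for any θ, θ′ ∈ Θ with |θ − θ′| ≥ 4B and 0 < r(θ, θ′) < 1, one has ((θ − θ′)²/4) / (4 − 2·r(θ, θ′)²) · (1/r(θ, θ′) − r(θ, θ′))² ≤ 2·sup_{θ ∈ Θ} Var_θ(θ̂). -/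

import Mathlib

/-!
Let `f, g` be the square roots of the densities of `P, Q` with respect to `P + Q`, so that
`f² + g² = 1` a.e., `∫ (f - g)² = 2H²` and `∫ (f + g)² = 4 - 2H²`. For `u = X - c` the difference
of the means is `D = ∫ u (f - g) (f + g)`. Applying Cauchy–Schwarz once with `u` attached to
`f - g` and once with `u` attached to `f + g`, and using `(u (f - g))² + (u (f + g))² = 2u²`, gives
`4D² ≤ 2 · 2H² (4 - 2H²) ∫ u²`. Taking `c` to be the midpoint of the two means,
`∫ u² d(P + Q) = Var_P X + Var_Q X + D²/2`, and this rearranges to the change-of-expectation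
inequality. Since the bias is at most `B` and `|θ - θ'| ≥ 4B`, we get `D ≥ |θ - θ'| / 2`.
-/

open MeasureTheory ProbabilityTheory

/-- The squared Hellinger distance `H(P,Q)²` between two measures on the same
measurable space, defined via the densities with respect to the dominating measure `P + Q`. -/
noncomputable def sqHellinger {Ω : Type*} [MeasurableSpace Ω] (P Q : Measure Ω) : ℝ :=
  (1 / 2) * ∫ ω, (Real.sqrt ((P.rnDeriv (P + Q) ω).toReal)
    - Real.sqrt ((Q.rnDeriv (P + Q) ω).toReal)) ^ 2 ∂(P + Q)

/-- The Hellinger distance `H(P,Q)` is the square root of `sqHellinger P Q`. -/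
noncomputable def hellinger {Ω : Type*} [MeasurableSpace Ω] (P Q : Measure Ω) : ℝ :=
  Real.sqrt (sqHellinger P Q)

section CauchySchwarz

variable {Ω : Type*} [MeasurableSpace Ω] {ν : Measure Ω}

theorem sq_integral_mul_le_integral_sq_mul_integral_sq {a b : Ω → ℝ} (ha : MemLp a 2 ν)
    (hb : MemLp b 2 ν) :
    (∫ ω, a ω * b ω ∂ν) ^ 2 ≤ (∫ ω, a ω ^ 2 ∂ν) * ∫ ω, b ω ^ 2 ∂ν := by
  have inner_toLp : ∀ {f g : Ω → ℝ} (hf : MemLp f 2 ν) (hg : MemLp g 2 ν),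
      inner ℝ (hf.toLp f) (hg.toLp g) = ∫ ω, f ω * g ω ∂ν := by
    intro f g hf hg
    rw [L2.inner_def]
    refine integral_congr_ae ?_
    filter_upwards [hf.coeFn_toLp, hg.coeFn_toLp] with ω hfω hgω
    simp [hfω, hgω, mul_comm]
  simpa only [inner_toLp, sq] using real_inner_mul_inner_self_le (ha.toLp a) (hb.toLp b)

theorem sq_integral_mul_sq_sub_sq_mul_le {u f g : Ω → ℝ}
    (hsub : MemLp (fun ω ↦ f ω - g ω) 2 ν) (hadd : MemLp (fun ω ↦ f ω + g ω) 2 ν)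
    (husub : MemLp (fun ω ↦ u ω * (f ω - g ω)) 2 ν)
    (huadd : MemLp (fun ω ↦ u ω * (f ω + g ω)) 2 ν) :
    (∫ ω, u ω * (f ω ^ 2 - g ω ^ 2) ∂ν) ^ 2
        * ((∫ ω, (f ω - g ω) ^ 2 ∂ν) + ∫ ω, (f ω + g ω) ^ 2 ∂ν)
      ≤ 2 * (∫ ω, (f ω - g ω) ^ 2 ∂ν) * (∫ ω, (f ω + g ω) ^ 2 ∂ν)
          * ∫ ω, u ω ^ 2 * (f ω ^ 2 + g ω ^ 2) ∂ν := by
  have hD₁ : ∫ ω, u ω * (f ω ^ 2 - g ω ^ 2) ∂ν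
      = ∫ ω, (u ω * (f ω - g ω)) * (f ω + g ω) ∂ν := by
    congr 1; ext ω; ring
  have hD₂ : ∫ ω, u ω * (f ω ^ 2 - g ω ^ 2) ∂ν
      = ∫ ω, (u ω * (f ω + g ω)) * (f ω - g ω) ∂ν := by
    congr 1; ext ω; ring
  have hCS₁ := sq_integral_mul_le_integral_sq_mul_integral_sq husub hadd
  have hCS₂ := sq_integral_mul_le_integral_sq_mul_integral_sq huadd hsub
  have hparallelogram : (∫ ω, (u ω * (f ω - g ω)) ^ 2 ∂ν) + ∫ ω, (u ω * (f ω + g ω)) ^ 2 ∂ν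
      = 2 * ∫ ω, u ω ^ 2 * (f ω ^ 2 + g ω ^ 2) ∂ν := by
    rw [← integral_add husub.integrable_sq huadd.integrable_sq, ← integral_const_mul]
    congr 1; ext ω; ring
  rw [← hD₁] at hCS₁
  rw [← hD₂] at hCS₂
  set a := ∫ ω, (f ω - g ω) ^ 2 ∂ν
  set b := ∫ ω, (f ω + g ω) ^ 2 ∂ν
  linear_combination a * hCS₁ + b * hCS₂ + a * b * hparallelogram

end CauchySchwarz

section Hellinger

variable {Ω : Type*} [MeasurableSpace Ω]

noncomputable def sqrtRnDeriv (μ ν : Measure Ω) (ω : Ω) : ℝ := √(μ.rnDeriv ν ω).toReal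

theorem sqrtRnDeriv_nonneg (μ ν : Measure Ω) (ω : Ω) : 0 ≤ sqrtRnDeriv μ ν ω :=
  Real.sqrt_nonneg _

theorem sq_sqrtRnDeriv (μ ν : Measure Ω) (ω : Ω) :
    sqrtRnDeriv μ ν ω ^ 2 = (μ.rnDeriv ν ω).toReal :=
  Real.sq_sqrt ENNReal.toReal_nonneg

theorem memLp_top_sqrtRnDeriv {μ ν : Measure Ω} [SigmaFinite ν] (hμν : μ ≤ ν) :
    MemLp (sqrtRnDeriv μ ν) ⊤ ν := by
  refine memLp_top_of_bound
    (Measure.measurable_rnDeriv μ ν).ennreal_toReal.sqrt.aestronglyMeasurable 1 ?_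
  filter_upwards [Measure.rnDeriv_le_one_of_le hμν] with ω hω
  rw [Real.norm_of_nonneg (sqrtRnDeriv_nonneg μ ν ω), sqrtRnDeriv, Real.sqrt_le_one]
  exact ENNReal.toReal_le_of_le_ofReal zero_le_one (by simpa using hω)

section

variable (P Q : Measure Ω)

theorem integral_sq_sqrtRnDeriv_sub :
    ∫ ω, (sqrtRnDeriv P (P + Q) ω - sqrtRnDeriv Q (P + Q) ω) ^ 2 ∂(P + Q)
      = 2 * sqHellinger P Q := by
  unfold sqHellinger sqrtRnDeriv; ring

theorem sqHellinger_nonneg : 0 ≤ sqHellinger P Q := by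
  unfold sqHellinger; positivity

theorem hellinger_nonneg : 0 ≤ hellinger P Q := Real.sqrt_nonneg _

theorem sq_hellinger : hellinger P Q ^ 2 = sqHellinger P Q :=
  Real.sq_sqrt (sqHellinger_nonneg P Q)

variable [IsFiniteMeasure P] [IsFiniteMeasure Q]

theorem memLp_sqrtRnDeriv_sub (p : ENNReal) :
    MemLp (fun ω ↦ sqrtRnDeriv P (P + Q) ω - sqrtRnDeriv Q (P + Q) ω) p (P + Q) :=
  ((memLp_top_sqrtRnDeriv (Measure.le_add_right le_rfl)).sub
    (memLp_top_sqrtRnDeriv (Measure.le_add_left le_rfl))).mono_exponent le_top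

theorem memLp_sqrtRnDeriv_add (p : ENNReal) :
    MemLp (fun ω ↦ sqrtRnDeriv P (P + Q) ω + sqrtRnDeriv Q (P + Q) ω) p (P + Q) :=
  ((memLp_top_sqrtRnDeriv (Measure.le_add_right le_rfl)).add
    (memLp_top_sqrtRnDeriv (Measure.le_add_left le_rfl))).mono_exponent le_top

theorem ae_sq_sqrtRnDeriv_add_sq :
    ∀ᵐ ω ∂(P + Q), sqrtRnDeriv P (P + Q) ω ^ 2 + sqrtRnDeriv Q (P + Q) ω ^ 2 = 1 := by
  filter_upwards [Measure.rnDeriv_add P Q (P + Q), Measure.rnDeriv_self (P + Q),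
    Measure.rnDeriv_lt_top P (P + Q), Measure.rnDeriv_lt_top Q (P + Q)] with ω hadd hself hP hQ
  rw [sq_sqrtRnDeriv, sq_sqrtRnDeriv, ← ENNReal.toReal_add hP.ne hQ.ne, ← Pi.add_apply, ← hadd,
    hself, ENNReal.toReal_one]

theorem integral_mul_toReal_rnDeriv_sub {u : Ω → ℝ} (huP : Integrable u P)
    (huQ : Integrable u Q) :
    ∫ ω, u ω * ((P.rnDeriv (P + Q) ω).toReal - (Q.rnDeriv (P + Q) ω).toReal) ∂(P + Q)
      = ∫ ω, u ω ∂P - ∫ ω, u ω ∂Q := by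
  have hP : P ≪ P + Q := (Measure.le_add_right le_rfl).absolutelyContinuous
  have hQ : Q ≪ P + Q := (Measure.le_add_left le_rfl).absolutelyContinuous
  rw [← integral_rnDeriv_smul hP, ← integral_rnDeriv_smul hQ, ← integral_sub
    ((integrable_rnDeriv_smul_iff hP).2 huP) ((integrable_rnDeriv_smul_iff hQ).2 huQ)]
  congr 1; ext ω; simp only [smul_eq_mul]; ring

end

variable (P Q : Measure Ω) [IsProbabilityMeasure P] [IsProbabilityMeasure Q]

theorem integral_sq_sqrtRnDeriv_add :
    ∫ ω, (sqrtRnDeriv P (P + Q) ω + sqrtRnDeriv Q (P + Q) ω) ^ 2 ∂(P + Q)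
      = 4 - 2 * sqHellinger P Q := by
  have hsum : (∫ ω, (sqrtRnDeriv P (P + Q) ω + sqrtRnDeriv Q (P + Q) ω) ^ 2 ∂(P + Q))
      + ∫ ω, (sqrtRnDeriv P (P + Q) ω - sqrtRnDeriv Q (P + Q) ω) ^ 2 ∂(P + Q) = 4 := by
    rw [← integral_add (memLp_sqrtRnDeriv_add P Q 2).integrable_sq
      (memLp_sqrtRnDeriv_sub P Q 2).integrable_sq]
    rw [integral_congr_ae (g := fun _ ↦ (2 : ℝ))]
    · simp only [integral_const, Measure.real_def, Measure.coe_add, Pi.add_apply, measure_univ,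
        smul_eq_mul]
      norm_num
    filter_upwards [ae_sq_sqrtRnDeriv_add_sq P Q] with ω h
    linear_combination 2 * h
  linarith [integral_sq_sqrtRnDeriv_sub P Q]

theorem sqHellinger_le_one : sqHellinger P Q ≤ 1 := by
  have hle := integral_mono (memLp_sqrtRnDeriv_sub P Q 2).integrable_sq
    (memLp_sqrtRnDeriv_add P Q 2).integrable_sq fun ω ↦ by
      nlinarith [mul_nonneg (sqrtRnDeriv_nonneg P (P + Q) ω) (sqrtRnDeriv_nonneg Q (P + Q) ω)]
  rw [integral_sq_sqrtRnDeriv_sub, integral_sq_sqrtRnDeriv_add] at hle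
  linarith

end Hellinger

section Moments

variable {Ω : Type*} [MeasurableSpace Ω]

theorem memLp_two_add_measure {μ ν : Measure Ω} {X : Ω → ℝ} (hμ : MemLp X 2 μ)
    (hν : MemLp X 2 ν) : MemLp X 2 (μ + ν) :=
  (memLp_two_iff_integrable_sq (hμ.1.add_measure hν.1)).2
    (integrable_add_measure.2 ⟨hμ.integrable_sq, hν.integrable_sq⟩)

theorem integral_sub_const_of_isProbabilityMeasure {μ : Measure Ω} [IsProbabilityMeasure μ]
    {X : Ω → ℝ} (hX : Integrable X μ) (c : ℝ) :
    ∫ ω, (X ω - c) ∂μ = ∫ ω, X ω ∂μ - c := by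
  simp [integral_sub hX (integrable_const c)]

theorem integral_sub_const_sq {μ : Measure Ω} [IsProbabilityMeasure μ] {X : Ω → ℝ}
    (hX : MemLp X 2 μ) (c : ℝ) :
    ∫ ω, (X ω - c) ^ 2 ∂μ = variance X μ + (∫ ω, X ω ∂μ - c) ^ 2 := by
  have h := variance_eq_sub (hX.sub (memLp_const c))
  rw [Pi.sub_def, variance_sub_const hX.1,
    integral_sub_const_of_isProbabilityMeasure (hX.integrable one_le_two)] at h
  rw [h]; simp

end Moments

section ChangeOfExpectation

variable {Ω : Type*} [MeasurableSpace Ω] (P Q : Measure Ω) [IsProbabilityMeasure P]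
  [IsProbabilityMeasure Q] {X : Ω → ℝ}

theorem sq_integral_sub_mul_sq_one_sub_sqHellinger_le (hP : MemLp X 2 P) (hQ : MemLp X 2 Q) :
    (∫ ω, X ω ∂P - ∫ ω, X ω ∂Q) ^ 2 * (1 - sqHellinger P Q) ^ 2
      ≤ 2 * sqHellinger P Q * (2 - sqHellinger P Q) * (variance X P + variance X Q) := by
  set c := (∫ ω, X ω ∂P + ∫ ω, X ω ∂Q) / 2
  have huP : MemLp (fun ω ↦ X ω - c) 2 P := hP.sub (memLp_const c)
  have huQ : MemLp (fun ω ↦ X ω - c) 2 Q := hQ.sub (memLp_const c)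
  have hu := memLp_two_add_measure huP huQ
  have hCS := sq_integral_mul_sq_sub_sq_mul_le (memLp_sqrtRnDeriv_sub P Q 2)
    (memLp_sqrtRnDeriv_add P Q 2) ((memLp_sqrtRnDeriv_sub P Q ⊤).mul' hu)
    ((memLp_sqrtRnDeriv_add P Q ⊤).mul' hu)
  have hmean : ∫ ω, (X ω - c) * (sqrtRnDeriv P (P + Q) ω ^ 2 - sqrtRnDeriv Q (P + Q) ω ^ 2)
      ∂(P + Q) = ∫ ω, X ω ∂P - ∫ ω, X ω ∂Q := by
    simp only [sq_sqrtRnDeriv]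
    rw [integral_mul_toReal_rnDeriv_sub P Q (huP.integrable one_le_two)
        (huQ.integrable one_le_two),
      integral_sub_const_of_isProbabilityMeasure (hP.integrable one_le_two),
      integral_sub_const_of_isProbabilityMeasure (hQ.integrable one_le_two)]
    ring
  have hsecond : ∫ ω, (X ω - c) ^ 2 * (sqrtRnDeriv P (P + Q) ω ^ 2 + sqrtRnDeriv Q (P + Q) ω ^ 2)
      ∂(P + Q) = variance X P + variance X Q + (∫ ω, X ω ∂P - ∫ ω, X ω ∂Q) ^ 2 / 2 := by
    rw [integral_congr_ae (g := fun ω ↦ (X ω - c) ^ 2), integral_add_measure huP.integrable_sq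
      huQ.integrable_sq, integral_sub_const_sq hP, integral_sub_const_sq hQ]
    · ring
    filter_upwards [ae_sq_sqrtRnDeriv_add_sq P Q] with ω h
    rw [h, mul_one]
  rw [hmean, hsecond, integral_sq_sqrtRnDeriv_sub, integral_sq_sqrtRnDeriv_add] at hCS
  linear_combination hCS / 4

theorem sq_integral_sub_div_mul_le_variance_add (hP : MemLp X 2 P) (hQ : MemLp X 2 Q) :
    (∫ ω, X ω ∂P - ∫ ω, X ω ∂Q) ^ 2 / (4 - 2 * hellinger P Q ^ 2)
        * (1 / hellinger P Q - hellinger P Q) ^ 2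
      ≤ variance X P + variance X Q := by
  have hVar : 0 ≤ variance X P + variance X Q :=
    add_nonneg (variance_nonneg X P) (variance_nonneg X Q)
  rcases (hellinger_nonneg P Q).eq_or_lt with hH | hH
  · -- the left side is `0` here, since `1 / 0 = 0` in Lean
    rw [← hH]; simpa using hVar
  have hH2 := sq_hellinger P Q
  have hle := sqHellinger_le_one P Q
  have hpos : 0 < sqHellinger P Q := hH2 ▸ pow_pos hH 2
  have hfactor :
      (1 / hellinger P Q - hellinger P Q) ^ 2 = (1 - sqHellinger P Q) ^ 2 / sqHellinger P Q := by
    rw [← hH2]; field_simp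
  rw [hH2, hfactor, div_mul_div_comm, div_le_iff₀ (by nlinarith)]
  linear_combination sq_integral_sub_mul_sq_one_sub_sqHellinger_le P Q hP hQ

end ChangeOfExpectation

theorem sq_div_four_le_sq_sub_of_abs_sub_le {x y a b B : ℝ} (hx : |x - a| ≤ B) (hy : |y - b| ≤ B)
    (hsep : 4 * B ≤ |a - b|) : (a - b) ^ 2 / 4 ≤ (x - y) ^ 2 := by
  have htri : |a - b| ≤ |x - a| + |x - y| + |y - b| := by
    calc |a - b| = |(x - y) - (x - a) + (y - b)| := by ring_nf
      _ ≤ |x - a| + |x - y| + |y - b| := by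
        linarith [abs_add_le ((x - y) - (x - a)) (y - b), abs_sub (x - y) (x - a)]
  nlinarith [sq_abs (a - b), sq_abs (x - y), abs_nonneg (a - b)]

/- The supremum of the worst-case variance is formalized by quantifying over all
upper bounds `V` of the variances `Var_θ(θ̂)`, `θ ∈ Θ`. -/
theorem stmt10_general {Ω : Type*} [MeasurableSpace Ω] (Θ : Set ℝ) (P : ℝ → Measure Ω)
    (hprob : ∀ θ ∈ Θ, IsProbabilityMeasure (P θ))
    (T : Ω → ℝ) (hL2 : ∀ θ ∈ Θ, MemLp T 2 (P θ))
    (B : ℝ)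
    (hbias : ∀ θ ∈ Θ, |(∫ ω, T ω ∂(P θ)) - θ| ≤ B)
    (θ θ' : ℝ) (hθ : θ ∈ Θ) (hθ' : θ' ∈ Θ) (hsep : 4 * B ≤ |θ - θ'|)
    (V : ℝ) (hV : ∀ σ ∈ Θ, variance T (P σ) ≤ V) :
    ((θ - θ') ^ 2 / 4) / (4 - 2 * hellinger (P θ) (P θ') ^ 2)
        * (1 / hellinger (P θ) (P θ') - hellinger (P θ) (P θ')) ^ 2
      ≤ 2 * V := by
  have := hprob θ hθ
  have := hprob θ' hθ'
  have hdenom : 0 ≤ 4 - 2 * hellinger (P θ) (P θ') ^ 2 := by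
    linarith [sq_hellinger (P θ) (P θ'), sqHellinger_le_one (P θ) (P θ')]
  calc ((θ - θ') ^ 2 / 4) / (4 - 2 * hellinger (P θ) (P θ') ^ 2)
        * (1 / hellinger (P θ) (P θ') - hellinger (P θ) (P θ')) ^ 2
      ≤ (∫ ω, T ω ∂(P θ) - ∫ ω, T ω ∂(P θ')) ^ 2 / (4 - 2 * hellinger (P θ) (P θ') ^ 2)
        * (1 / hellinger (P θ) (P θ') - hellinger (P θ) (P θ')) ^ 2 := by
        gcongr
        exact sq_div_four_le_sq_sub_of_abs_sub_le (hbias θ hθ) (hbias θ' hθ') hsep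
    _ ≤ variance T (P θ) + variance T (P θ') :=
        sq_integral_sub_div_mul_le_variance_add _ _ (hL2 θ hθ) (hL2 θ' hθ')
    _ ≤ 2 * V := by linarith [hV θ hθ, hV θ' hθ']

theorem stmt10 {Ω : Type*} [MeasurableSpace Ω] (Θ : Set ℝ) (P : ℝ → Measure Ω)
    (hprob : ∀ θ ∈ Θ, IsProbabilityMeasure (P θ))
    (T : Ω → ℝ) (hT : Measurable T) (hL2 : ∀ θ ∈ Θ, MemLp T 2 (P θ))
    (B : ℝ) (hB : 0 ≤ B)
    (hbias : ∀ θ ∈ Θ, |(∫ ω, T ω ∂(P θ)) - θ| ≤ B)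
    (θ θ' : ℝ) (hθ : θ ∈ Θ) (hθ' : θ' ∈ Θ) (hsep : 4 * B ≤ |θ - θ'|)
    (hr0 : 0 < hellinger (P θ) (P θ')) (hr1 : hellinger (P θ) (P θ') < 1)
    (V : ℝ) (hV : ∀ σ ∈ Θ, variance T (P σ) ≤ V) :
    ((θ - θ') ^ 2 / 4) / (4 - 2 * hellinger (P θ) (P θ') ^ 2)
        * (1 / hellinger (P θ) (P θ') - hellinger (P θ) (P θ')) ^ 2
      ≤ 2 * V :=
  stmt10_general Θ P hprob T hL2 B hbias θ θ' hθ hθ' hsep V hV
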